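/- Let k ≥ 2 be an integer, c = (c_1,…,c_k) a vector of positive reals, and for L > 0 set D_L = {y ∈ ℝ^{k−1} : y_i > 0 for all i and ∑_{i=1}^{k−1} c_i y_i < L} and φ_L(y) = (y_1,…,y_{k−1}, (L − ∑_{i=1}^{k−1} c_i y_i)/c_k) ∈ ℝ^k. Let K ⊆ ℝ^k be a measurable set that is a cone, i.e., t·x ∈ K whenever x ∈ K and t > 0. Let m ≥ 0 and let P : ℝ^k → ℝ be a polynomial function of total degree at most m with top-degree homogeneous part P^⊤ (the homogeneous part of degree m). Then lim_{L→∞} (1/L^{m+k−1}) · ∫_{{y ∈ D_L : φ_L(y) ∈ K}} P(φ_L(y)) dy = ∫_{{y ∈ D_1 : φ_1(y) ∈ K}} P^⊤(φ_1(y)) dy. -/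
import Mathlib

open MeasureTheory Finset Filter
open scoped Pointwise

lemma my_eval_smul_of_isHomogeneous {σ : Type*} (Q : MvPolynomial σ ℝ) {n : ℕ}
    (hQ : Q.IsHomogeneous n) (r : ℝ) (x : σ → ℝ) :
    MvPolynomial.eval (r • x) Q = r ^ n * MvPolynomial.eval x Q := by
  rw [MvPolynomial.eval_eq, MvPolynomial.eval_eq, Finset.mul_sum]
  apply Finset.sum_congr rfl
  intro d hd
  have hn : ∑ i ∈ d.support, d i = n := by
    have := hQ (MvPolynomial.mem_support_iff.mp hd)
    simpa [Finsupp.weight_apply, Finsupp.sum, smul_eq_mul, mul_one] using this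
  simp only [Pi.smul_apply, smul_eq_mul, mul_pow, Finset.prod_mul_distrib,
    Finset.prod_pow_eq_pow_sum, hn]
  ring

set_option maxHeartbeats 1600000 in
theorem simplex_integral_leading_term
    (k : ℕ) (hk : 2 ≤ k) (c : Fin k → ℝ) (hc : ∀ i, 0 < c i)
    (K : Set (Fin k → ℝ)) (hK : MeasurableSet K)
    (hcone : ∀ x ∈ K, ∀ t : ℝ, 0 < t → t • x ∈ K)
    (m : ℕ) (P : MvPolynomial (Fin k) ℝ) (hP : P.totalDegree ≤ m)
    (D : ℝ → Set (Fin (k - 1) → ℝ))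
    (hD : ∀ L, D L =
      {y | (∀ i, 0 < y i) ∧ ∑ i, c (Fin.castLE (Nat.sub_le k 1) i) * y i < L})
    (φ : ℝ → (Fin (k - 1) → ℝ) → (Fin k → ℝ))
    (hφ : ∀ L y j, φ L y j =
      if h : (j : ℕ) < k - 1 then y ⟨j, h⟩
      else (L - ∑ i, c (Fin.castLE (Nat.sub_le k 1) i) * y i) / c ⟨k - 1, by omega⟩) :
    Tendsto
      (fun L : ℝ => (1 / L ^ (m + k - 1)) *
        ∫ y in {y ∈ D L | φ L y ∈ K}, MvPolynomial.eval (φ L y) P)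
      atTop
      (nhds (∫ y in {y ∈ D 1 | φ 1 y ∈ K},
        MvPolynomial.eval (φ 1 y) (MvPolynomial.homogeneousComponent m P))) := by
  set cc : Fin (k - 1) → ℝ := fun i => c (Fin.castLE (Nat.sub_le k 1) i) with hcc
  set S : ℝ → Set (Fin (k - 1) → ℝ) := fun L => {y ∈ D L | φ L y ∈ K} with hS
  have hck : (0:ℝ) < c ⟨k - 1, by omega⟩ := hc _
  -- φ is homogeneous of degree 1 jointly in (L, y)
  have hφsmul : ∀ (L : ℝ) (z : Fin (k-1) → ℝ), φ L (L • z) = L • φ 1 z := by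
    intro L z
    funext j
    rw [hφ, Pi.smul_apply, hφ]
    by_cases h : (j : ℕ) < k - 1
    · simp [h]
    · simp only [dif_neg h, smul_eq_mul]
      have : ∑ i, cc i * (L • z) i = L * ∑ i, cc i * z i := by
        rw [Finset.mul_sum]
        exact Finset.sum_congr rfl fun i _ => by simp [Pi.smul_apply, smul_eq_mul]; ring
      rw [this]
      rw [show L - L * ∑ i, cc i * z i = L * (1 - ∑ i, cc i * z i) by ring, mul_div_assoc]
  -- scaling of sets
  have hmem : ∀ L : ℝ, 0 < L → ∀ z, (L • z ∈ S L ↔ z ∈ S 1) := by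
    intro L hL z
    simp only [hS, Set.mem_setOf_eq, Set.sep_setOf, hD]
    constructor
    · rintro ⟨⟨hpos, hsum⟩, hKmem⟩
      refine ⟨⟨fun i => ?_, ?_⟩, ?_⟩
      · have := hpos i
        rw [Pi.smul_apply, smul_eq_mul] at this
        exact (mul_pos_iff_of_pos_left hL).mp this
      · have : ∑ i, cc i * (L • z) i = L * ∑ i, cc i * z i := by
          rw [Finset.mul_sum]
          exact Finset.sum_congr rfl fun i _ => by simp [Pi.smul_apply, smul_eq_mul]; ring
        rw [this] at hsum
        nlinarith
      · rw [hφsmul] at hKmem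
        have := hcone _ hKmem L⁻¹ (inv_pos.mpr hL)
        rwa [inv_smul_smul₀ hL.ne'] at this
    · rintro ⟨⟨hpos, hsum⟩, hKmem⟩
      refine ⟨⟨fun i => ?_, ?_⟩, ?_⟩
      · rw [Pi.smul_apply, smul_eq_mul]
        exact mul_pos hL (hpos i)
      · have : ∑ i, cc i * (L • z) i = L * ∑ i, cc i * z i := by
          rw [Finset.mul_sum]
          exact Finset.sum_congr rfl fun i _ => by simp [Pi.smul_apply, smul_eq_mul]; ring
        rw [this]
        nlinarith
      · rw [hφsmul]
        exact hcone _ hKmem L hL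
  have hSsmul : ∀ L : ℝ, 0 < L → L • S 1 = S L := by
    intro L hL
    ext y
    rw [Set.mem_smul_set_iff_inv_smul_mem₀ hL.ne', ← hmem L hL (L⁻¹ • y),
      smul_inv_smul₀ hL.ne']
  -- continuity of φ L
  have hφcont : ∀ L : ℝ, Continuous (φ L) := by
    intro L
    apply continuous_pi
    intro j
    simp only [hφ]
    by_cases h : (j : ℕ) < k - 1
    · simp only [dif_pos h]
      exact continuous_apply _
    · simp only [dif_neg h]
      exact ((continuous_const.sub (continuous_finset_sum _ fun i _ =>
        continuous_const.mul (continuous_apply i))).div_const _)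
  -- boundedness of S 1
  obtain ⟨R, hR0, hRball⟩ :
      ∃ R : ℝ, 0 ≤ R ∧ S 1 ⊆ Metric.closedBall 0 R := by
    refine ⟨∑ i, (cc i)⁻¹, Finset.sum_nonneg fun i _ => (inv_pos.mpr (hc _)).le, ?_⟩
    intro z hz
    rw [hS, Set.mem_sep_iff, hD, Set.mem_setOf_eq] at hz
    obtain ⟨⟨hpos, hsum⟩, -⟩ := hz
    rw [Metric.mem_closedBall, dist_zero_right]
    apply pi_norm_le_iff_of_nonneg (Finset.sum_nonneg fun i _ => (inv_pos.mpr (hc _)).le) |>.mpr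
    intro i
    rw [Real.norm_eq_abs, abs_of_pos (hpos i)]
    have h1 : cc i * z i ≤ ∑ j, cc j * z j := by
      apply Finset.single_le_sum (f := fun j => cc j * z j) (fun j _ => (mul_pos (hc _) (hpos j)).le)
      exact Finset.mem_univ i
    have h2 : z i ≤ (cc i)⁻¹ := by
      rw [inv_eq_one_div, le_div_iff₀ (hc _)]
      nlinarith
    calc z i ≤ (cc i)⁻¹ := h2
      _ ≤ ∑ j, (cc j)⁻¹ := Finset.single_le_sum
          (f := fun j => (cc j)⁻¹) (fun j _ => (inv_pos.mpr (hc _)).le) (Finset.mem_univ i)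
  -- integrability on S 1
  have hInt : ∀ Q : MvPolynomial (Fin k) ℝ,
      IntegrableOn (fun z => MvPolynomial.eval (φ 1 z) Q) (S 1) := by
    intro Q
    have hcont : Continuous fun z => MvPolynomial.eval (φ 1 z) Q :=
      (MvPolynomial.continuous_eval (p := Q)).comp (hφcont 1)
    exact (hcont.continuousOn.integrableOn_compact
      (isCompact_closedBall 0 R)).mono_set hRball
  -- decomposition of P
  have hPdecomp : ∑ d ∈ range (m + 1), MvPolynomial.homogeneousComponent d P = P := by
    have h1 : ∑ d ∈ range (P.totalDegree + 1), MvPolynomial.homogeneousComponent d P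
        = ∑ d ∈ range (m + 1), MvPolynomial.homogeneousComponent d P := by
      apply Finset.sum_subset (Finset.range_subset_range.mpr (Nat.succ_le_succ hP))
      intro d hd hd'
      rw [Finset.mem_range] at hd hd'
      exact MvPolynomial.homogeneousComponent_eq_zero (n := d) (φ := P) (by omega)
    rw [← h1, MvPolynomial.sum_homogeneousComponent]
  have heval : ∀ (L : ℝ) (x : Fin k → ℝ), MvPolynomial.eval (L • x) P =
      ∑ d ∈ range (m + 1), L ^ d *
        MvPolynomial.eval x (MvPolynomial.homogeneousComponent d P) := by
    intro L x
    conv_lhs => rw [← hPdecomp]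
    rw [map_sum]
    exact Finset.sum_congr rfl fun d _ => my_eval_smul_of_isHomogeneous _
      (MvPolynomial.homogeneousComponent_isHomogeneous d P) L x
  -- the key scaling identity
  have key : ∀ L : ℝ, 0 < L →
      (∫ y in S L, MvPolynomial.eval (φ L y) P) =
        L ^ (k - 1) * ∑ d ∈ range (m + 1), L ^ d *
          ∫ z in S 1, MvPolynomial.eval (φ 1 z) (MvPolynomial.homogeneousComponent d P) := by
    intro L hL
    rw [← hSsmul L hL]
    have hcs := Measure.setIntegral_comp_smul_of_pos (volume)
      (fun y => MvPolynomial.eval (φ L y) P) (S 1) hL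
    have hfr : Module.finrank ℝ (Fin (k - 1) → ℝ) = k - 1 := Module.finrank_fin_fun ℝ
    rw [hfr, smul_eq_mul] at hcs
    have : (∫ x in L • S 1, MvPolynomial.eval (φ L x) P) =
        L ^ (k - 1) * ∫ z in S 1, MvPolynomial.eval (φ L (L • z)) P := by
      rw [hcs, ← mul_assoc, mul_inv_cancel₀ (pow_ne_zero _ hL.ne'), one_mul]
    rw [this]
    congr 1
    have hre : ∀ z : Fin (k-1) → ℝ, MvPolynomial.eval (φ L (L • z)) P =
        ∑ d ∈ range (m + 1), L ^ d *
          MvPolynomial.eval (φ 1 z) (MvPolynomial.homogeneousComponent d P) := by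
      intro z; rw [hφsmul, heval]
    rw [MeasureTheory.integral_congr_ae (Filter.Eventually.of_forall hre)]
    rw [MeasureTheory.integral_finset_sum _ (fun d _ => (hInt _).const_mul _)]
    exact Finset.sum_congr rfl fun d _ => MeasureTheory.integral_const_mul _ _
  -- final limit computation
  set I : ℕ → ℝ := fun d =>
    ∫ z in S 1, MvPolynomial.eval (φ 1 z) (MvPolynomial.homogeneousComponent d P) with hI
  have hlim : Tendsto (fun L : ℝ => ∑ d ∈ range (m + 1), (L ^ d / L ^ m) * I d)
      atTop (nhds (I m)) := by
    have : Tendsto (fun L : ℝ => ∑ d ∈ range (m + 1), (L ^ d / L ^ m) * I d)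
        atTop (nhds (∑ d ∈ range (m + 1), (if d = m then (1:ℝ) else 0) * I d)) := by
      apply tendsto_finset_sum
      intro d hd
      rw [Finset.mem_range] at hd
      apply Tendsto.mul_const
      by_cases hdm : d = m
      · subst hdm
        simp only [if_pos rfl]
        apply Tendsto.congr' (f₁ := fun _ : ℝ => (1:ℝ)) _ tendsto_const_nhds
        filter_upwards [eventually_gt_atTop (0:ℝ)] with L hL
        rw [div_self (pow_ne_zero _ hL.ne')]
      · simp only [if_neg hdm]
        have hmd : d < m := by omega
        apply Tendsto.congr' (f₁ := fun L : ℝ => (L ^ (m - d))⁻¹)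
        · filter_upwards [eventually_gt_atTop (0:ℝ)] with L hL
          rw [eq_div_iff (pow_ne_zero _ hL.ne'), inv_mul_eq_div,
            div_eq_iff (pow_ne_zero _ hL.ne'), ← pow_add]
          congr 1
          omega
        · exact (tendsto_pow_atTop (by omega : m - d ≠ 0)).inv_tendsto_atTop
    convert this using 2
    rw [Finset.sum_congr rfl (fun d _ => by rw [ite_mul, zero_mul, one_mul]),
      Finset.sum_ite_eq' (range (m+1)) m I, if_pos (Finset.self_mem_range_succ m)]
  apply Tendsto.congr' _ hlim
  filter_upwards [eventually_gt_atTop (0:ℝ)] with L hL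
  show ∑ d ∈ range (m + 1), (L ^ d / L ^ m) * I d =
    (1 / L ^ (m + k - 1)) * ∫ y in S L, MvPolynomial.eval (φ L y) P
  rw [key L hL]
  have hexp : m + k - 1 = (k - 1) + m := by omega
  rw [hexp, pow_add, Finset.mul_sum, Finset.mul_sum]
  apply Finset.sum_congr rfl
  intro d _
  have h1 : (L:ℝ) ^ (k-1) ≠ 0 := pow_ne_zero _ hL.ne'
  have h2 : (L:ℝ) ^ m ≠ 0 := pow_ne_zero _ hL.ne'
  field_simp
  ring
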